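/- Let G be an n-player Büchi game on a possibly infinite arena, where player i's objective is Büchi(T_i) for a set T_i ⊆ V. Let π' be the outcome from v_0 of some Nash equilibrium such that some vertex occurs infinitely often in π' and Sat(π') ≠ ∅. Then there exists a Nash-equilibrium outcome π from v_0 with Sat(π) = Sat(π') admitting an infinite simple segment decomposition (sg_0, sg_1, sg_2, …) such that: (i) for all l ≥ 1 and all players i ∉ Sat(π), no vertex of T_i occurs in sg_l; (ii) there exists K with 1 ≤ K ≤ |Sat(π')| such that sg_l = sg_{l+K} for all l ≥ 1; and (iii) either K = 1 and sg_1 is a simple cycle, or K > 1 and sg_l is a nontrivial simple history for all l ∈ [K]. -/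

import Mathlib

open scoped ENNReal Classical

/-- An `n`-player arena on a (possibly infinite) directed graph: an edge relation
with no deadlocks, together with an assignment of each vertex to its owner. -/
structure Arena (V : Type) (n : ℕ) where
  E : V → V → Prop
  owner : V → Fin n
  no_deadlock : ∀ v, ∃ v', E v v'

namespace Arena

variable {V : Type} {n : ℕ}

/-- A play: an infinite sequence of vertices following edges. -/
def IsPlay (A : Arena V n) (π : ℕ → V) : Prop := ∀ j, A.E (π j) (π (j + 1))

/-- A strategy: given the past history (the earlier vertices, oldest first) and the
current vertex, pick an `E`-successor of the current vertex. -/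
structure Strategy (A : Arena V n) where
  next : List V → V → V
  valid : ∀ h v, A.E v (next h v)

/-- The list of the first `j` vertices of a play. -/
def pref (π : ℕ → V) (j : ℕ) : List V := (List.range j).map π

/-- A play is consistent with the strategy `σ` used by player `i`. -/
def Consistent (A : Arena V n) (i : Fin n) (σ : A.Strategy) (π : ℕ → V) : Prop :=
  ∀ j, A.owner (π j) = i → π (j + 1) = σ.next (pref π j) (π j)

/-- A memoryless strategy only depends on the current vertex. -/
def Memoryless {A : Arena V n} (σ : A.Strategy) : Prop :=
  ∀ h h' v, σ.next h v = σ.next h' v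

def outcomeAux (A : Arena V n) (σ : Fin n → A.Strategy) (v0 : V) : ℕ → List V × V
  | 0 => ([], v0)
  | j + 1 =>
      let p := outcomeAux A σ v0 j
      (p.1 ++ [p.2], (σ (A.owner p.2)).next p.1 p.2)

/-- The outcome of the strategy profile `σ` from `v0`: the unique play from `v0`
consistent with every strategy of the profile. -/
def outcome (A : Arena V n) (σ : Fin n → A.Strategy) (v0 : V) (j : ℕ) : V :=
  (outcomeAux A σ v0 j).2

/-- Reachability objective: visit `T`. -/
def ReachObj (T : Set V) : Set (ℕ → V) := {π | ∃ j, π j ∈ T}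

/-- Safety objective: never visit `T`. -/
def SafeObj (T : Set V) : Set (ℕ → V) := {π | ∀ j, π j ∉ T}

/-- Büchi objective: visit `T` infinitely often. -/
def BuchiObj (T : Set V) : Set (ℕ → V) := {π | ∀ j, ∃ k, j ≤ k ∧ π k ∈ T}

/-- co-Büchi objective: visit `T` only finitely often. -/
def CoBuchiObj (T : Set V) : Set (ℕ → V) := {π | ∃ j, ∀ k, j ≤ k → π k ∉ T}

/-- Shortest-path cost of a play: the total weight up to the first visit of `T`,
and `⊤` if `T` is never visited. -/
noncomputable def spCost (w : V → V → ℕ) (T : Set V) (π : ℕ → V) : ℝ≥0∞ :=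
  if ∃ k, π k ∈ T then
    (Finset.range (sInf {k | π k ∈ T})).sum fun j => (w (π j) (π (j + 1)) : ℝ≥0∞)
  else ⊤

/-- Winning region of player `p` (whose objective is `Ω`) in a two-player game:
vertices from which `p` has a strategy all of whose consistent plays lie in `Ω`. -/
def WinRegion (A : Arena V 2) (p : Fin 2) (Ω : Set (ℕ → V)) : Set V :=
  {v | ∃ σ : A.Strategy, ∀ π, A.IsPlay π → π 0 = v → A.Consistent p σ π → π ∈ Ω}

/-- Lower value `inf_{σ₁} sup_{σ₂}` of a two-player zero-sum game with cost `c`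
(minimised by player 1, maximised by player 2). -/
noncomputable def valIS (A : Arena V 2) (c : (ℕ → V) → ℝ≥0∞) (v : V) : ℝ≥0∞ :=
  ⨅ σ1 : A.Strategy, ⨆ σ2 : A.Strategy, c (outcome A ![σ1, σ2] v)

/-- Upper value `sup_{σ₂} inf_{σ₁}`. -/
noncomputable def valSI (A : Arena V 2) (c : (ℕ → V) → ℝ≥0∞) (v : V) : ℝ≥0∞ :=
  ⨆ σ2 : A.Strategy, ⨅ σ1 : A.Strategy, c (outcome A ![σ1, σ2] v)

/-- Nash equilibrium from `v0` for cost functions (each player minimises):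
no unilateral deviation decreases the deviator's cost. -/
def IsNECost (A : Arena V n) (cost : Fin n → (ℕ → V) → ℝ≥0∞)
    (σ : Fin n → A.Strategy) (v0 : V) : Prop :=
  ∀ (i : Fin n) (τ : A.Strategy),
    cost i (outcome A σ v0) ≤ cost i (outcome A (Function.update σ i τ) v0)

/-- Nash equilibrium from `v0` for objectives: if a unilateral deviation of player `i`
satisfies `Ω i`, then so does the equilibrium outcome. -/
def IsNEObj (A : Arena V n) (Ω : Fin n → Set (ℕ → V))
    (σ : Fin n → A.Strategy) (v0 : V) : Prop :=
  ∀ (i : Fin n) (τ : A.Strategy),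
    outcome A (Function.update σ i τ) v0 ∈ Ω i → outcome A σ v0 ∈ Ω i

/-- The coalition arena of player `i`: player `i` (as player `0`) against all others. -/
def coalition (A : Arena V n) (i : Fin n) : Arena V 2 where
  E := A.E
  owner := fun v => if A.owner v = i then 0 else 1
  no_deadlock := A.no_deadlock

/-- Winning region of player `i` in their coalition game for objective `Ω`. -/
def coalWin (A : Arena V n) (i : Fin n) (Ω : Set (ℕ → V)) : Set V :=
  WinRegion (coalition A i) 0 Ω

/-- Value of a vertex in player `i`'s coalition game with cost `c`. -/
noncomputable def coalVal (A : Arena V n) (i : Fin n) (c : (ℕ → V) → ℝ≥0∞) (v : V) :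
    ℝ≥0∞ :=
  valIS (coalition A i) c v

/-- Players whose reachability objective is satisfied by `π`. -/
def satReach (T : Fin n → Set V) (π : ℕ → V) : Set (Fin n) := {i | ∃ j, π j ∈ T i}

/-- Players whose safety objective is satisfied by `π`. -/
def satSafe (T : Fin n → Set V) (π : ℕ → V) : Set (Fin n) := {i | ∀ j, π j ∉ T i}

/-- Players whose Büchi objective is satisfied by `π`. -/
def satBuchi (T : Fin n → Set V) (π : ℕ → V) : Set (Fin n) :=
  {i | ∀ j, ∃ k, j ≤ k ∧ π k ∈ T i}

/-- Players whose co-Büchi objective is satisfied by `π`. -/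
def satCoBuchi (T : Fin n → Set V) (π : ℕ → V) : Set (Fin n) :=
  {i | ∃ j, ∀ k, j ≤ k → π k ∉ T i}

/-- Earliest positions at which the targets visited by `π` are first visited. -/
def visitSet (T : Fin n → Set V) (π : ℕ → V) : Set ℕ :=
  {m | ∃ i, (∃ j, π j ∈ T i) ∧ m = sInf {j | π j ∈ T i}}

/-- A Mealy machine with memory states `M`. -/
structure Mealy (A : Arena V n) (M : Type) where
  init : M
  up : M → V → M
  nxt : M → V → V
  valid : ∀ m v, A.E v (nxt m v)

/-- The strategy `σ` is induced by the Mealy machine `mm`. -/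
def InducedBy {A : Arena V n} {M : Type} (σ : A.Strategy) (mm : Mealy A M) : Prop :=
  ∀ h v, σ.next h v = mm.nxt (h.foldl mm.up mm.init) v

/-- `σ` has memory size at most `b`. -/
def HasMemorySize {A : Arena V n} (σ : A.Strategy) (b : ℕ) : Prop :=
  ∃ (M : Type) (mm : Mealy A M), Finite M ∧ Nat.card M ≤ b ∧ InducedBy σ mm

/-- `σ` is a finite-memory strategy. -/
def FiniteMemory {A : Arena V n} (σ : A.Strategy) : Prop :=
  ∃ (M : Type) (mm : Mealy A M), Finite M ∧ InducedBy σ mm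

/-- The (finite) segment of `π` between positions `a` and `b` is a simple history. -/
def SimpleSeg (π : ℕ → V) (a b : ℕ) : Prop :=
  ∀ m m', a ≤ m → m ≤ b → a ≤ m' → m' ≤ b → π m = π m' → m = m'

/-- The suffix of `π` from position `a` is a simple play. -/
def SimplePlaySeg (π : ℕ → V) (a : ℕ) : Prop :=
  ∀ m m', a ≤ m → a ≤ m' → π m = π m' → m = m'

/-- The suffix of `π` from position `a` is a simple lasso `p c^ω` with `p c`
a simple history. -/
def SimpleLassoSeg (π : ℕ → V) (a : ℕ) : Prop :=
  ∃ k ℓ, 0 < ℓ ∧ (∀ m, a + k ≤ m → π (m + ℓ) = π m) ∧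
    ∀ m m', a ≤ m → m < a + k + ℓ → a ≤ m' → m' < a + k + ℓ → π m = π m' → m = m'

/-- The segment of `π` between positions `a` and `b` is a simple cycle. -/
def SimpleCycleSeg (π : ℕ → V) (a b : ℕ) : Prop :=
  a < b ∧ π b = π a ∧
    ∀ m m', a ≤ m → m < b → a ≤ m' → m' < b → π m = π m' → m = m'

/-- Total weight of a history (a list of vertices). -/
def histWeight (w : V → V → ℕ) : List V → ℕ
  | [] => 0
  | [_] => 0
  | a :: b :: t => w a b + histWeight w (b :: t)

/-- The list of vertices along positions `a..b` (inclusive) of a play. -/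
def segList (π : ℕ → V) (a b : ℕ) : List V :=
  (List.range (b - a + 1)).map fun m => π (a + m)

/-- The segment of `π` between positions `a` and `b` has minimal weight among all
histories that share its first and last vertex and traverse only its vertices. -/
def MinWeightSeg (A : Arena V n) (w : V → V → ℕ) (π : ℕ → V) (a b : ℕ) : Prop :=
  ∀ h : List V, h ≠ [] → List.Chain' A.E h →
    h.head? = some (π a) → h.getLast? = some (π b) →
    (∀ x ∈ h, ∃ m, a ≤ m ∧ m ≤ b ∧ π m = x) →
    histWeight w (segList π a b) ≤ histWeight w h

/-- Given cut positions `p`, segments number `l` and `l'` of `π` carry the same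
vertex sequence. -/
def SegEq (π : ℕ → V) (p : ℕ → ℕ) (l l' : ℕ) : Prop :=
  p (l' + 1) - p l' = p (l + 1) - p l ∧
    ∀ m, m ≤ p (l + 1) - p l → π (p l' + m) = π (p l + m)

/-- There is no cycle of the arena using only vertices of `S` and avoiding `avoid`. -/
def NoCycleAvoid (A : Arena V n) (S : Set V) (avoid : V) : Prop :=
  ¬ ∃ (m : ℕ) (c : ℕ → V), 0 < m ∧ (∀ j, j < m → A.E (c j) (c (j + 1))) ∧
      c m = c 0 ∧ ∀ j, j ≤ m → c j ∈ S ∧ c j ≠ avoid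

end Arena

open Arena

/-!
Past some position no target of a losing player occurs any more, and a vertex occurring infinitely
often closes there a loop `π'[a..b]` of `π'` visiting a target of every winning player. One target
vertex per winner gives `K ≤ |Sat(π')|` anchors; shortcutting walks around the loop gives simple
histories between consecutive anchors (a simple cycle if `K = 1`), and shortcutting `π'` itself a
simple history from `v0` to the first anchor. The play `π` made of this prefix followed by the legs
repeated forever only visits vertices of `π'` and satisfies exactly the players of `π'`.

It is an equilibrium outcome: play along `π`, and once a player has left `π` at a vertex `π e`,
continue with `σ'` as if the history were that of `π'` up to a position showing `π e`. A profitable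
deviation from `π` then yields one from `π'`, since Büchi objectives are prefix-independent.
-/

lemma Set.Finite.exists_periodic_enum {α : Type*} {X : Set α} (hX : X.Finite)
    (hne : X.Nonempty) :
    ∃ u : ℕ → α, Set.range u = X ∧ Function.Periodic u X.ncard ∧
      (1 < X.ncard → ∀ r, u (r + 1) ≠ u r) := by
  have := hX.to_subtype
  have hK : 0 < X.ncard := (Set.ncard_pos hX).2 hne
  let e : X ≃ Fin X.ncard := (Finite.equivFin X).trans (finCongr (Nat.card_coe_set_eq X))
  have hu : ∀ r s, (e.symm ⟨r % X.ncard, Nat.mod_lt _ hK⟩ : α) =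
      e.symm ⟨s % X.ncard, Nat.mod_lt _ hK⟩ ↔ r % X.ncard = s % X.ncard := by
    intro r s
    rw [Subtype.coe_inj, e.symm.apply_eq_iff_eq, Fin.mk.injEq]
  refine ⟨fun r => e.symm ⟨r % X.ncard, Nat.mod_lt _ hK⟩, ?_, fun r => ?_, fun hK1 r h => ?_⟩
  · refine Set.Subset.antisymm (Set.range_subset_iff.2 fun r => Subtype.mem _) fun x hx => ?_
    refine ⟨e ⟨x, hx⟩, ?_⟩
    simp [Nat.mod_eq_of_lt (e ⟨x, hx⟩).2]
  · exact (hu _ _).2 (Nat.add_mod_right r _)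
  · have h1 : 1 ≡ 0 [MOD X.ncard] := Nat.ModEq.add_left_cancel' r ((hu _ _).1 h)
    rw [Nat.ModEq, Nat.mod_eq_of_lt hK1, Nat.zero_mod] at h1
    exact one_ne_zero h1

namespace Arena

variable {V : Type} {n : ℕ}

section Prefix

@[simp]
lemma length_pref (π : ℕ → V) (j : ℕ) : (pref π j).length = j := by
  simp [pref]

lemma pref_succ (π : ℕ → V) (j : ℕ) : pref π (j + 1) = pref π j ++ [π j] := by
  simp [pref, List.range_succ]

lemma pref_eq_pref_iff {π ρ : ℕ → V} {j : ℕ} : pref ρ j = pref π j ↔ ∀ s < j, ρ s = π s := by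
  simp [pref, List.map_inj_left]

lemma pref_add (ρ : ℕ → V) (e t : ℕ) :
    pref ρ (e + t) = pref ρ e ++ (List.range t).map (fun s => ρ (e + s)) := by
  simp only [pref, List.range_add, List.map_append, List.map_map]
  rfl

lemma take_pref (ρ : ℕ → V) {j k : ℕ} (h : j ≤ k) : (pref ρ k).take j = pref ρ j := by
  rw [pref, ← List.map_take, List.take_range, min_eq_left h, pref]

lemma drop_pref (ρ : ℕ → V) (e t : ℕ) :
    (pref ρ (e + t)).drop e = (List.range t).map (fun s => ρ (e + s)) := by
  rw [pref_add, List.drop_left' (length_pref ρ e)]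

end Prefix

section Outcome

variable {A : Arena V n}

lemma outcomeAux_fst (σ : Fin n → A.Strategy) (v0 : V) (j : ℕ) :
    (outcomeAux A σ v0 j).1 = pref (outcome A σ v0) j := by
  induction j with
  | zero => rfl
  | succ j ih => rw [pref_succ, ← ih]; rfl

lemma outcome_succ (σ : Fin n → A.Strategy) (v0 : V) (j : ℕ) :
    outcome A σ v0 (j + 1) =
      (σ (A.owner (outcome A σ v0 j))).next (pref (outcome A σ v0) j) (outcome A σ v0 j) := by
  rw [← outcomeAux_fst]; rfl

lemma isPlay_outcome (σ : Fin n → A.Strategy) (v0 : V) : A.IsPlay (outcome A σ v0) := by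
  intro j
  rw [outcome_succ]
  exact (σ _).valid _ _

lemma outcome_eq_of_succ {σ : Fin n → A.Strategy} {v0 : V} {ρ : ℕ → V} (h0 : ρ 0 = v0)
    (hsucc : ∀ j, ρ (j + 1) = (σ (A.owner (ρ j))).next (pref ρ j) (ρ j)) :
    outcome A σ v0 = ρ := by
  funext j
  induction j using Nat.strong_induction_on with
  | _ j ih =>
    rcases j with _ | j
    · exact h0.symm
    · rw [outcome_succ, hsucc, ih j j.lt_succ_self,
        pref_eq_pref_iff.2 fun s hs => ih s (hs.trans j.lt_succ_self)]

end Outcome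

section Strategies

variable {A : Arena V n}

noncomputable def Strategy.follow (ρ : ℕ → V) (hρ : A.IsPlay ρ) (σ : A.Strategy) :
    A.Strategy where
  next h v := if h = pref ρ h.length ∧ v = ρ h.length then ρ (h.length + 1) else σ.next h v
  valid h v := by
    split_ifs with hc
    · rw [hc.2]; exact hρ _
    · exact σ.valid h v

lemma Strategy.follow_next_pref {ρ : ℕ → V} (hρ : A.IsPlay ρ) (σ : A.Strategy) (j : ℕ) :
    (Strategy.follow ρ hρ σ).next (pref ρ j) (ρ j) = ρ (j + 1) := by
  simp [Strategy.follow]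

lemma Strategy.follow_next_of_not {ρ : ℕ → V} (hρ : A.IsPlay ρ) (σ : A.Strategy) {h : List V}
    {v : V} (hoff : ¬ (h = pref ρ h.length ∧ v = ρ h.length)) :
    (Strategy.follow ρ hρ σ).next h v = σ.next h v :=
  if_neg hoff

lemma outcome_follow {ρ : ℕ → V} (hρ : A.IsPlay ρ) (σ : Fin n → A.Strategy) :
    outcome A (fun k => (σ k).follow ρ hρ) (ρ 0) = ρ :=
  outcome_eq_of_succ rfl fun j => (Strategy.follow_next_pref hρ _ j).symm

def Strategy.comapHist (σ : A.Strategy) (ψ : List V → List V) : A.Strategy :=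
  ⟨fun h v => σ.next (ψ h) v, fun _ _ => σ.valid _ _⟩

def FollowsExcept (σ : Fin n → A.Strategy) (i : Fin n) (ρ : ℕ → V) : Prop :=
  ∀ j, A.owner (ρ j) ≠ i → ρ (j + 1) = (σ (A.owner (ρ j))).next (pref ρ j) (ρ j)

lemma outcome_update_follow {σ : Fin n → A.Strategy} {i : Fin n} {ρ : ℕ → V}
    (hρ : A.IsPlay ρ) (hfol : FollowsExcept σ i ρ) :
    outcome A (Function.update σ i ((σ i).follow ρ hρ)) (ρ 0) = ρ := by
  refine outcome_eq_of_succ rfl fun j => ?_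
  by_cases hj : A.owner (ρ j) = i
  · rw [hj, Function.update_self, Strategy.follow_next_pref]
  · rw [Function.update_of_ne hj, hfol j hj]

end Strategies

section Splice

def splice (π : ℕ → V) (g : ℕ) (ρ : ℕ → V) (e : ℕ) (m : ℕ) : V :=
  if m < g then π m else ρ (e + (m - g))

variable {π ρ : ℕ → V} {g e : ℕ}

lemma splice_of_lt {m : ℕ} (hm : m < g) : splice π g ρ e m = π m := if_pos hm

lemma splice_add (t : ℕ) : splice π g ρ e (g + t) = ρ (e + t) := by
  simp [splice]

lemma splice_of_le (hge : π g = ρ e) {m : ℕ} (hm : m ≤ g) : splice π g ρ e m = π m := by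
  rcases hm.lt_or_eq with hm | rfl
  · exact splice_of_lt hm
  · simpa [hge] using splice_add (π := π) (ρ := ρ) (e := e) (g := m) 0

lemma pref_splice_add (t : ℕ) :
    pref (splice π g ρ e) (g + t) = pref π g ++ (pref ρ (e + t)).drop e := by
  rw [pref_add, drop_pref, pref_eq_pref_iff.2 fun s hs => splice_of_lt hs]
  simp only [splice_add]

lemma isPlay_splice {A : Arena V n} (hπ : A.IsPlay π) (hρ : A.IsPlay ρ) (hge : π g = ρ e) :
    A.IsPlay (splice π g ρ e) := by
  intro m
  rcases lt_or_ge m g with hm | hm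
  · rw [splice_of_le hge hm.le, splice_of_le hge hm]
    exact hπ m
  · obtain ⟨t, rfl⟩ := Nat.exists_eq_add_of_le hm
    rw [splice_add, add_assoc, splice_add]
    exact hρ _

end Splice

def PrefixIndependent (Ω : Set (ℕ → V)) : Prop :=
  ∀ (ρ ρ' : ℕ → V) (e g : ℕ), (∀ t, ρ' (g + t) = ρ (e + t)) → ρ ∈ Ω → ρ' ∈ Ω

lemma prefixIndependent_buchiObj (T : Set V) : PrefixIndependent (BuchiObj T) := by
  intro ρ ρ' e g htail hρ j
  obtain ⟨k, hjk, hk⟩ := hρ (e + j)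
  refine ⟨g + (k - e), by omega, ?_⟩
  rwa [htail, Nat.add_sub_cancel' (by omega)]

lemma exists_agree_le_and_succ_ne {f g : ℕ → V} (h0 : f 0 = g 0) (hne : f ≠ g) :
    ∃ e, (∀ s ≤ e, f s = g s) ∧ f (e + 1) ≠ g (e + 1) := by
  have hex : ∃ d, f d ≠ g d := Function.ne_iff.1 hne
  have hd : Nat.find hex ≠ 0 := fun h => Nat.find_spec hex (by rwa [h])
  obtain ⟨e, he⟩ := Nat.exists_eq_succ_of_ne_zero hd
  refine ⟨e, fun s hs => not_not.1 (Nat.find_min hex (by omega)), ?_⟩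
  rw [← Nat.succ_eq_add_one, ← he]
  exact Nat.find_spec hex

/-- A history that follows `π` up to position `e` and then leaves it is rewritten into the
history of `π'` up to position `F e`, where `π'` shows the vertex `π e`, followed by the part of
the history from position `e` on. -/
noncomputable def reroute (π π' : ℕ → V) (F : ℕ → ℕ) (h : List V) : List V :=
  let j := Nat.findGreatest (fun j => h.take j = pref π j) h.length
  if j = 0 then h else pref π' (F (j - 1)) ++ h.drop (j - 1)

lemma reroute_pref {π π' ρ : ℕ → V} {F : ℕ → ℕ} {e k : ℕ} (hagree : ∀ s ≤ e, ρ s = π s)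
    (hdiv : ρ (e + 1) ≠ π (e + 1)) (hk : e < k) :
    reroute π π' F (pref ρ k) = pref π' (F e) ++ (pref ρ k).drop e := by
  have hfind : Nat.findGreatest (fun j => (pref ρ k).take j = pref π j) (pref ρ k).length
      = e + 1 := by
    rw [length_pref, Nat.findGreatest_eq_iff]
    refine ⟨hk, fun _ => ?_, fun j hj hjk hP => ?_⟩
    · rw [take_pref ρ hk, pref_eq_pref_iff]
      exact fun s hs => hagree s (by omega)
    · rw [take_pref ρ hjk, pref_eq_pref_iff] at hP
      exact hdiv (hP _ hj)
  simp only [reroute, hfind]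
  simp

lemma followsExcept_splice {A : Arena V n} {σ : Fin n → A.Strategy} {v0 : V} {i : Fin n}
    {ρ : ℕ → V} {g e : ℕ} (hge : outcome A σ v0 g = ρ e)
    (hρ : ∀ t, A.owner (ρ (e + t)) ≠ i → ρ (e + t + 1) =
      (σ (A.owner (ρ (e + t)))).next (pref (outcome A σ v0) g ++ (pref ρ (e + t)).drop e)
        (ρ (e + t))) :
    FollowsExcept σ i (splice (outcome A σ v0) g ρ e) := by
  intro m hm
  rcases lt_or_ge m g with hlt | hle
  · rw [splice_of_le hge hlt.le, splice_of_le hge hlt,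
      pref_eq_pref_iff.2 fun s hs => splice_of_lt (hs.trans hlt)]
    exact outcome_succ σ v0 m
  · obtain ⟨t, rfl⟩ := Nat.exists_eq_add_of_le hle
    rw [splice_add] at hm
    rw [show g + t + 1 = g + (t + 1) by omega, splice_add, splice_add, pref_splice_add]
    exact hρ t hm

theorem IsNEObj.exists_outcome_eq_of_range_subset {A : Arena V n} {Ω : Fin n → Set (ℕ → V)}
    (hΩ : ∀ i, PrefixIndependent (Ω i)) {σ' : Fin n → A.Strategy} {v0 : V}
    (hNE : A.IsNEObj Ω σ' v0) {π : ℕ → V} (hπ0 : π 0 = v0) (hπ : A.IsPlay π)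
    (hrange : Set.range π ⊆ Set.range (outcome A σ' v0))
    (hsat : ∀ i, outcome A σ' v0 ∈ Ω i → π ∈ Ω i) :
    ∃ σ : Fin n → A.Strategy, outcome A σ v0 = π ∧ A.IsNEObj Ω σ v0 := by
  set π' := outcome A σ' v0
  choose F hF using fun m => hrange (Set.mem_range_self m)
  set σ : Fin n → A.Strategy := fun k => ((σ' k).comapHist (reroute π π' F)).follow π hπ
  have hout : outcome A σ v0 = π := hπ0 ▸ outcome_follow hπ _
  refine ⟨σ, hout, fun i τ hdev => ?_⟩
  rw [hout]
  by_contra hi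
  set ρ := outcome A (Function.update σ i τ) v0
  have hρsucc : ∀ j, ρ (j + 1) =
      (Function.update σ i τ (A.owner (ρ j))).next (pref ρ j) (ρ j) := outcome_succ _ v0
  obtain ⟨e, hagree, hdiv⟩ := exists_agree_le_and_succ_ne (f := ρ) hπ0.symm
    fun h => hi (by rwa [h] at hdev)
  have hprefe : pref ρ e = pref π e := pref_eq_pref_iff.2 fun s hs => hagree s hs.le
  -- a player other than `i` at `ρ e = π e` would have continued along `π`
  have hown : A.owner (ρ e) = i := by
    by_contra hk
    apply hdiv
    rw [hρsucc, Function.update_of_ne hk, hprefe, hagree e le_rfl]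
    exact Strategy.follow_next_pref hπ _ e
  have hge : π' (F e) = ρ e := (hF e).trans (hagree e le_rfl).symm
  have hfol : FollowsExcept σ' i (splice π' (F e) ρ e) := by
    refine followsExcept_splice hge fun t ht => ?_
    have hpos : 0 < t := Nat.pos_of_ne_zero fun h => ht (by simpa [h] using hown)
    have hoff : ¬ (pref ρ (e + t) = pref π (pref ρ (e + t)).length ∧
        ρ (e + t) = π (pref ρ (e + t)).length) := by
      rintro ⟨hpref, hlast⟩
      rw [length_pref] at hpref hlast
      have hsucc : pref ρ (e + t + 1) = pref π (e + t + 1) := by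
        rw [pref_succ, pref_succ, hpref, hlast]
      exact hdiv (pref_eq_pref_iff.1 hsucc (e + 1) (by omega))
    rw [hρsucc, Function.update_of_ne ht, Strategy.follow_next_of_not hπ _ hoff]
    exact congrArg (fun h => (σ' _).next h _) (reroute_pref hagree hdiv (by omega))
  have hdev' : splice π' (F e) ρ e ∈ Ω i := hΩ i ρ _ e (F e) (fun t => splice_add t) hdev
  rw [← outcome_update_follow (isPlay_splice (isPlay_outcome σ' v0) (isPlay_outcome _ v0) hge)
    hfol, splice_of_le hge (Nat.zero_le _)] at hdev'
  exact hi (hsat i (hNE i _ hdev'))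

section Walks

open Set

variable {E : V → V → Prop}

def IsWalk (E : V → V → Prop) (w : ℕ → V) (m : ℕ) : Prop := ∀ t < m, E (w t) (w (t + 1))

def cutLoop (w : ℕ → V) (a b s : ℕ) : V := if s ≤ a then w s else w (s + (b - a))

variable {w : ℕ → V} {m a b : ℕ}

lemma isWalk_cutLoop (hw : IsWalk E w m) (hab : a ≤ b) (hbm : b ≤ m) (hloop : w a = w b) :
    IsWalk E (cutLoop w a b) (m - (b - a)) := by
  intro s hs
  unfold Arena.cutLoop
  by_cases hsa : s + 1 ≤ a
  · rw [if_pos (by omega), if_pos hsa]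
    exact hw s (by omega)
  · by_cases hs' : s ≤ a
    · obtain rfl : s = a := by omega
      rw [if_pos hs', if_neg hsa, hloop, show s + 1 + (b - s) = b + 1 by omega]
      exact hw b (by omega)
    · rw [if_neg hs', if_neg hsa, show s + 1 + (b - a) = s + (b - a) + 1 by omega]
      exact hw _ (by omega)

lemma cutLoop_zero : cutLoop w a b 0 = w 0 := if_pos (Nat.zero_le a)

lemma cutLoop_sub (hab : a ≤ b) (hbm : b ≤ m) (hloop : w a = w b) :
    cutLoop w a b (m - (b - a)) = w m := by
  unfold cutLoop
  split_ifs with h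
  · rw [show m - (b - a) = a by omega, hloop, show b = m by omega]
  · rw [Nat.sub_add_cancel (by omega)]

lemma image_cutLoop_subset (hbm : b ≤ m) : cutLoop w a b '' Iic (m - (b - a)) ⊆ w '' Iic m := by
  rintro _ ⟨s, hs, rfl⟩
  unfold cutLoop
  split_ifs with h
  · exact ⟨s, by simp only [mem_Iic] at hs ⊢; omega, rfl⟩
  · exact ⟨s + (b - a), by simp only [mem_Iic] at hs ⊢; omega, rfl⟩

lemma IsWalk.exists_injOn (hw : IsWalk E w m) :
    ∃ (m' : ℕ) (w' : ℕ → V), IsWalk E w' m' ∧ w' 0 = w 0 ∧ w' m' = w m ∧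
      InjOn w' (Iic m') ∧ w' '' Iic m' ⊆ w '' Iic m := by
  have hex : ∃ k, ∃ w' : ℕ → V, IsWalk E w' k ∧ w' 0 = w 0 ∧ w' k = w m ∧
      w' '' Iic k ⊆ w '' Iic m := ⟨m, w, hw, rfl, rfl, subset_rfl⟩
  obtain ⟨w', hw', h0, hend, himg⟩ := Nat.find_spec hex
  refine ⟨_, w', hw', h0, hend, ?_, himg⟩
  -- a repetition could be cut out, giving a shorter walk
  have hshort : ∀ s t, s < t → t ≤ Nat.find hex → w' s ≠ w' t := by
    intro s t hst ht hloop
    have := Nat.find_min' hex ⟨cutLoop w' s t, isWalk_cutLoop hw' hst.le ht hloop,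
      by rw [cutLoop_zero, h0], by rw [cutLoop_sub hst.le ht hloop, hend],
      (image_cutLoop_subset ht).trans himg⟩
    omega
  intro s hs t ht hst
  by_contra hne
  rcases lt_or_gt_of_ne hne with h | h
  · exact hshort s t h ht hst
  · exact hshort t s h hs hst.symm

lemma IsWalk.exists_injOn_cycle (hw : IsWalk E w m) (hm : 0 < m) (hcl : w m = w 0) :
    ∃ (m' : ℕ) (w' : ℕ → V), 0 < m' ∧ IsWalk E w' m' ∧ w' 0 = w 0 ∧ w' m' = w 0 ∧
      InjOn w' (Iio m') ∧ w' '' Iic m' ⊆ w '' Iic m := by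
  have hex : ∃ k, 0 < k ∧ ∃ w' : ℕ → V, IsWalk E w' k ∧ w' 0 = w 0 ∧ w' k = w 0 ∧
      w' '' Iic k ⊆ w '' Iic m := ⟨m, hm, w, hw, rfl, hcl, subset_rfl⟩
  obtain ⟨hpos, w', hw', h0, hend, himg⟩ := Nat.find_spec hex
  refine ⟨_, w', hpos, hw', h0, hend, ?_, himg⟩
  have hshort : ∀ s t, s < t → t < Nat.find hex → w' s ≠ w' t := by
    intro s t hst ht hloop
    have := Nat.find_min' hex ⟨by omega, cutLoop w' s t, isWalk_cutLoop hw' hst.le ht.le hloop,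
      by rw [cutLoop_zero, h0], by rw [cutLoop_sub hst.le ht.le hloop, hend],
      (image_cutLoop_subset ht.le).trans himg⟩
    omega
  intro s hs t ht hst
  by_contra hne
  rcases lt_or_gt_of_ne hne with h | h
  · exact hshort s t h ht hst
  · exact hshort t s h hs hst.symm

lemma exists_walk_on_loop {π : ℕ → V} (hπ : ∀ t, E (π t) (π (t + 1))) (hab : a < b)
    (hloop : π b = π a) {x y : V} (hx : x ∈ π '' Ico a b) (hy : y ∈ π '' Ico a b) :
    ∃ (m : ℕ) (w : ℕ → V), 0 < m ∧ IsWalk E w m ∧ w 0 = x ∧ w m = y ∧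
      w '' Iic m ⊆ π '' Ico a b := by
  obtain ⟨i, ⟨hai, hib⟩, rfl⟩ := hx
  obtain ⟨j, ⟨haj, hjb⟩, rfl⟩ := hy
  set L := b - a
  have hL : 0 < L := by omega
  have hround : ∀ t, E (π (a + t % L)) (π (a + (t + 1) % L)) := by
    intro t
    have hdiv := Nat.mod_add_div t L
    have hlt := Nat.mod_lt t hL
    by_cases hwrap : t % L + 1 < L
    · rw [show t + 1 = (t % L + 1) + L * (t / L) by omega, Nat.add_mul_mod_self_left,
        Nat.mod_eq_of_lt hwrap, ← add_assoc]
      exact hπ _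
    · rw [show t + 1 = L * (t / L + 1) by rw [Nat.mul_succ]; omega, Nat.mul_mod_right,
        add_zero, ← hloop, show b = a + t % L + 1 by omega]
      exact hπ _
  refine ⟨j - a + L - (i - a), fun t => π (a + (i - a + t) % L), by omega,
    fun t _ => by simpa only [add_assoc] using hround (i - a + t), ?_, ?_, ?_⟩
  · simp only [add_zero, Nat.mod_eq_of_lt (show i - a < L by omega)]
    congr 1; omega
  · simp only [show i - a + (j - a + L - (i - a)) = j - a + L by omega, Nat.add_mod_right,
      Nat.mod_eq_of_lt (show j - a < L by omega)]
    congr 1; omega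
  · rintro _ ⟨t, -, rfl⟩
    exact ⟨a + (i - a + t) % L, ⟨by omega, by have := Nat.mod_lt (i - a + t) hL; omega⟩, rfl⟩

lemma exists_simple_walk_on_loop {π : ℕ → V} (hπ : ∀ t, E (π t) (π (t + 1))) (hab : a < b)
    (hloop : π b = π a) {x y : V} (hx : x ∈ π '' Ico a b) (hy : y ∈ π '' Ico a b) :
    ∃ (m : ℕ) (w : ℕ → V), 0 < m ∧ IsWalk E w m ∧ w 0 = x ∧ w m = y ∧
      w '' Iic m ⊆ π '' Ico a b ∧ (x = y → InjOn w (Iio m)) ∧ (x ≠ y → InjOn w (Iic m)) := by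
  obtain ⟨m, w, hm, hw, h0, hend, himg⟩ := exists_walk_on_loop hπ hab hloop hx hy
  by_cases hxy : x = y
  · obtain ⟨m', w', hm', hw', h0', hend', hinj, himg'⟩ :=
      hw.exists_injOn_cycle hm (by rw [hend, h0, hxy])
    exact ⟨m', w', hm', hw', h0'.trans h0, by rw [hend', h0, hxy], himg'.trans himg,
      fun _ => hinj, fun h => absurd hxy h⟩
  · obtain ⟨m', w', hw', h0', hend', hinj, himg'⟩ := hw.exists_injOn
    refine ⟨m', w', Nat.pos_of_ne_zero fun h => hxy ?_, hw', h0'.trans h0, hend'.trans hend,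
      himg'.trans himg, fun h => absurd h hxy, fun _ => hinj⟩
    rw [← h0, ← hend, ← h0', ← hend', h]

end Walks

section Concat

open Set

def cut (len : ℕ → ℕ) (r : ℕ) : ℕ := ∑ k ∈ Finset.range r, len k

noncomputable def segIdx (len : ℕ → ℕ) (t : ℕ) : ℕ := sInf {r | t < cut len (r + 1)}

noncomputable def concatWalks (len : ℕ → ℕ) (w : ℕ → ℕ → V) (t : ℕ) : V :=
  w (segIdx len t) (t - cut len (segIdx len t))

variable {len : ℕ → ℕ} {w : ℕ → ℕ → V}

@[simp]
lemma cut_zero : cut len 0 = 0 := Finset.sum_range_zero _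

lemma cut_succ (r : ℕ) : cut len (r + 1) = cut len r + len r := Finset.sum_range_succ _ _

lemma cut_mono : Monotone (cut len) :=
  monotone_nat_of_le_succ fun r => by rw [cut_succ]; exact Nat.le_add_right _ _

lemma le_cut_succ (hpos : ∀ r, 0 < len (r + 1)) (r : ℕ) : r ≤ cut len (r + 1) := by
  induction r with
  | zero => exact Nat.zero_le _
  | succ r ih => rw [cut_succ]; have := hpos r; omega

lemma segIdx_cut_add {r s : ℕ} (hs : s < len r) : segIdx len (cut len r + s) = r := by
  have hmem : r ∈ {r' | cut len r + s < cut len (r' + 1)} := by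
    simp only [mem_ofPred_eq, cut_succ]; omega
  refine le_antisymm (Nat.sInf_le hmem) (le_csInf ⟨r, hmem⟩ fun r' hr' => ?_)
  by_contra! hlt
  have := cut_mono (len := len) (show r' + 1 ≤ r by omega)
  simp only [mem_ofPred_eq] at hr'
  omega

lemma concatWalks_cut_add {r s : ℕ} (hs : s < len r) :
    concatWalks len w (cut len r + s) = w r s := by
  simp [concatWalks, segIdx_cut_add hs]

lemma concatWalks_cut_add_of_le (hpos : ∀ r, 0 < len (r + 1))
    (hlink : ∀ r, w r (len r) = w (r + 1) 0) {r s : ℕ} (hs : s ≤ len r) :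
    concatWalks len w (cut len r + s) = w r s := by
  rcases hs.lt_or_eq with hs | rfl
  · exact concatWalks_cut_add hs
  · rw [hlink, ← cut_succ, ← add_zero (cut len (r + 1)), concatWalks_cut_add (hpos r)]

lemma exists_concatWalks_eq (hpos : ∀ r, 0 < len (r + 1)) (t : ℕ) :
    ∃ r s, s < len r ∧ t = cut len r + s ∧ concatWalks len w t = w r s := by
  have hne : {r | t < cut len (r + 1)}.Nonempty :=
    ⟨t + 1, by have := le_cut_succ hpos (t + 1); simp only [mem_ofPred_eq]; omega⟩
  set r := segIdx len t
  have hlt : t < cut len (r + 1) := Nat.sInf_mem hne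
  have hle : cut len r ≤ t := by
    rcases Nat.eq_zero_or_pos r with h | h
    · rw [h, cut_zero]; exact Nat.zero_le t
    · have := Nat.notMem_of_lt_sInf (show r - 1 < r by omega)
      simp only [mem_ofPred_eq, not_lt, Nat.sub_add_cancel h] at this
      exact this
  rw [cut_succ] at hlt
  refine ⟨r, t - cut len r, by omega, by omega, ?_⟩
  conv_lhs => rw [show t = cut len r + (t - cut len r) by omega]
  exact concatWalks_cut_add (by omega)

lemma isPlay_concatWalks {A : Arena V n} (hpos : ∀ r, 0 < len (r + 1))
    (hlink : ∀ r, w r (len r) = w (r + 1) 0) (hw : ∀ r, IsWalk A.E (w r) (len r)) :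
    A.IsPlay (concatWalks len w) := by
  intro t
  obtain ⟨r, s, hs, rfl, -⟩ := exists_concatWalks_eq (w := w) hpos t
  rw [add_assoc, concatWalks_cut_add_of_le hpos hlink hs.le,
    concatWalks_cut_add_of_le hpos hlink hs]
  exact hw r s hs

end Concat

section Decomposition

open Set

variable {π v : ℕ → V} {c k : ℕ}

lemma simpleSeg_of_injOn (hπ : ∀ s ≤ k, π (c + s) = v s) (hinj : InjOn v (Iic k)) :
    SimpleSeg π c (c + k) := by
  intro m m' hm hmk hm' hmk' heq
  rw [← Nat.add_sub_cancel' hm, ← Nat.add_sub_cancel' hm', hπ _ (by omega),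
    hπ _ (by omega)] at heq
  have := hinj (show m - c ∈ Iic k by simp only [mem_Iic]; omega)
    (show m' - c ∈ Iic k by simp only [mem_Iic]; omega) heq
  omega

lemma simpleCycleSeg_of_injOn (hk : 0 < k) (hπ : ∀ s ≤ k, π (c + s) = v s) (hcl : v k = v 0)
    (hinj : InjOn v (Iio k)) : SimpleCycleSeg π c (c + k) := by
  refine ⟨by omega, by rw [hπ k le_rfl, ← add_zero c, hπ 0 (Nat.zero_le k), hcl], ?_⟩
  intro m m' hm hmk hm' hmk' heq
  rw [← Nat.add_sub_cancel' hm, ← Nat.add_sub_cancel' hm', hπ _ (by omega),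
    hπ _ (by omega)] at heq
  have := hinj (show m - c ∈ Iio k by simp only [mem_Iio]; omega)
    (show m' - c ∈ Iio k by simp only [mem_Iio]; omega) heq
  omega

def IsPeriodicSimpleDecomp (π : ℕ → V) (p : ℕ → ℕ) (K : ℕ) : Prop :=
  p 0 = 0 ∧ (∀ l, p l ≤ p (l + 1)) ∧ (∀ l, 1 ≤ l → p l < p (l + 1)) ∧
    (∀ l, SimpleSeg π (p l) (p (l + 1)) ∨ SimpleCycleSeg π (p l) (p (l + 1))) ∧
    (∀ l, 1 ≤ l → SegEq π p l (l + K)) ∧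
    ((K = 1 ∧ SimpleCycleSeg π (p 1) (p 2)) ∨
      (1 < K ∧ ∀ l, 1 ≤ l → l ≤ K → p l < p (l + 1) ∧ SimpleSeg π (p l) (p (l + 1))))

lemma simpleSeg_concatWalks {len : ℕ → ℕ} {w : ℕ → ℕ → V} (hpos : ∀ r, 0 < len (r + 1))
    (hlink : ∀ r, w r (len r) = w (r + 1) 0) {r : ℕ} (hinj : InjOn (w r) (Iic (len r))) :
    SimpleSeg (concatWalks len w) (cut len r) (cut len (r + 1)) := by
  rw [cut_succ]
  exact simpleSeg_of_injOn (fun s hs => concatWalks_cut_add_of_le hpos hlink hs) hinj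

lemma simpleCycleSeg_concatWalks {len : ℕ → ℕ} {w : ℕ → ℕ → V} (hpos : ∀ r, 0 < len (r + 1))
    (hlink : ∀ r, w r (len r) = w (r + 1) 0) {r : ℕ} (hr : 0 < len r)
    (hcl : w r (len r) = w r 0) (hinj : InjOn (w r) (Iio (len r))) :
    SimpleCycleSeg (concatWalks len w) (cut len r) (cut len (r + 1)) := by
  rw [cut_succ]
  exact simpleCycleSeg_of_injOn hr (fun s hs => concatWalks_cut_add_of_le hpos hlink hs) hcl hinj

lemma isPeriodicSimpleDecomp_concatWalks {len : ℕ → ℕ} {w : ℕ → ℕ → V} {K : ℕ}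
    (hpos : ∀ r, 0 < len (r + 1)) (hlink : ∀ r, w r (len r) = w (r + 1) 0)
    (hlen : ∀ r, len (r + 1 + K) = len (r + 1)) (hwper : ∀ r, w (r + 1 + K) = w (r + 1))
    (hinj0 : InjOn (w 0) (Iic (len 0)))
    (hinj : (K = 1 ∧ ∀ r, InjOn (w (r + 1)) (Iio (len (r + 1)))) ∨
      (1 < K ∧ ∀ r, InjOn (w (r + 1)) (Iic (len (r + 1))))) :
    IsPeriodicSimpleDecomp (concatWalks len w) (cut len) K := by
  have hstrict : ∀ r, cut len (r + 1) < cut len (r + 1 + 1) := by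
    intro r; rw [cut_succ (r + 1)]; have := hpos r; omega
  have hcycle : K = 1 → ∀ r,
      SimpleCycleSeg (concatWalks len w) (cut len (r + 1)) (cut len (r + 1 + 1)) := by
    rintro rfl r
    refine simpleCycleSeg_concatWalks hpos hlink (hpos r) (by rw [hlink, hwper]) ?_
    exact (hinj.resolve_right (by omega)).2 r
  have hpath : 1 < K → ∀ r,
      SimpleSeg (concatWalks len w) (cut len (r + 1)) (cut len (r + 1 + 1)) :=
    fun hK r => simpleSeg_concatWalks hpos hlink ((hinj.resolve_left (by omega)).2 r)
  refine ⟨cut_zero, fun l => cut_mono l.le_succ, fun l hl => ?_, ?_, fun l hl => ?_, ?_⟩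
  · obtain ⟨r, rfl⟩ := Nat.exists_eq_add_of_le' hl
    exact hstrict r
  · rintro (_ | r)
    · exact Or.inl (simpleSeg_concatWalks hpos hlink hinj0)
    · rcases hinj with ⟨hK, -⟩ | ⟨hK, -⟩
      · exact Or.inr (hcycle hK r)
      · exact Or.inl (hpath hK r)
  · obtain ⟨r, rfl⟩ := Nat.exists_eq_add_of_le' hl
    have hseg : ∀ l, ∀ s ≤ len l, concatWalks len w (cut len l + s) = w l s :=
      fun l s hs => concatWalks_cut_add_of_le hpos hlink hs
    refine ⟨by rw [cut_succ (r + 1 + K), cut_succ (r + 1), hlen]; omega, fun m hm => ?_⟩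
    rw [cut_succ (r + 1)] at hm
    rw [hseg (r + 1 + K) m (by rw [hlen]; omega), hseg (r + 1) m (by omega), hwper]
  · rcases hinj with ⟨hK, -⟩ | ⟨hK, -⟩
    · exact Or.inl ⟨hK, hcycle hK 0⟩
    · refine Or.inr ⟨hK, fun l hl _ => ?_⟩
      obtain ⟨r, rfl⟩ := Nat.exists_eq_add_of_le' hl
      exact ⟨hstrict r, hpath hK r⟩

end Decomposition

open Set Filter

lemma exists_loop_visiting_targets {π : ℕ → V} (hinf : ∃ v, ∀ j, ∃ k, j ≤ k ∧ π k = v)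
    (T : Fin n → Set V) :
    ∃ a b, a < b ∧ π b = π a ∧ (∀ i ∈ satBuchi T π, ∃ q ∈ Ico a b, π q ∈ T i) ∧
      ∀ i ∉ satBuchi T π, ∀ k, a ≤ k → π k ∉ T i := by
  obtain ⟨v, hv⟩ := hinf
  have hlose : ∀ᶠ k in atTop, ∀ i ∉ satBuchi T π, π k ∉ T i :=
    eventually_all.2 fun i => eventually_imp_distrib_left.2 fun hi => by
      simp only [satBuchi, mem_ofPred_eq, not_forall, not_exists, not_and] at hi
      obtain ⟨j, hj⟩ := hi
      exact eventually_atTop.2 ⟨j, hj⟩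
  obtain ⟨J, hJ⟩ := eventually_atTop.1 hlose
  obtain ⟨a, haJ, hva⟩ := hv J
  have hwin : ∀ᶠ b in atTop, a < b ∧ ∀ i ∈ satBuchi T π, ∃ q ∈ Ico a b, π q ∈ T i :=
    (eventually_gt_atTop a).and <| eventually_all.2 fun i =>
      eventually_imp_distrib_left.2 fun hi => by
        obtain ⟨q, haq, hq⟩ := hi a
        exact eventually_atTop.2 ⟨q + 1, fun b hb => ⟨q, ⟨haq, by omega⟩, hq⟩⟩
  obtain ⟨b, hvb, hab, hwin⟩ := ((frequently_atTop.2 hv).and_eventually hwin).exists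
  exact ⟨a, b, hab, hvb.trans hva.symm, hwin, fun i hi k hk => hJ k (haJ.trans hk) i hi⟩

theorem exists_lasso_of_loop {A : Arena V n} {π' : ℕ → V} (hπ' : A.IsPlay π') {a b : ℕ}
    (hab : a < b) (hloop : π' b = π' a) {K : ℕ} (hK : 0 < K) {u : ℕ → V}
    (hu : ∀ r, u r ∈ π' '' Ico a b) (hper : Function.Periodic u K)
    (hne : 1 < K → ∀ r, u (r + 1) ≠ u r) :
    ∃ (π : ℕ → V) (p : ℕ → ℕ), π 0 = π' 0 ∧ A.IsPlay π ∧ range π ⊆ range π' ∧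
      (∀ m, p 1 ≤ m → π m ∈ π' '' Ico a b) ∧ (∀ r j, ∃ m, j ≤ m ∧ π m = u r) ∧
      IsPeriodicSimpleDecomp π p K := by
  choose! lam leg hleg using fun x (hx : x ∈ π' '' Ico a b) y (hy : y ∈ π' '' Ico a b) =>
    exists_simple_walk_on_loop hπ' hab hloop hx hy
  choose hpos hlegWalk hlegStart hlegEnd hlegImg hlegCycle hlegPath using
    fun r => hleg _ (hu r) _ (hu (r + 1))
  obtain ⟨t0, -, ht0⟩ := hu 0
  obtain ⟨a0, pre, hpre, hpre0, hpreEnd, hpreInj, hpreImg⟩ :=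
    (show IsWalk A.E π' t0 from fun t _ => hπ' t).exists_injOn
  let len : ℕ → ℕ
    | 0 => a0
    | r + 1 => lam (u r) (u (r + 1))
  let w : ℕ → ℕ → V
    | 0 => pre
    | r + 1 => leg (u r) (u (r + 1))
  have hlink : ∀ r, w r (len r) = w (r + 1) 0 := by
    rintro (_ | r)
    · exact (hpreEnd.trans ht0).trans (hlegStart 0).symm
    · exact (hlegEnd r).trans (hlegStart (r + 1)).symm
  have hshift : ∀ r, r + 1 + K = r + K + 1 := fun r => by omega
  have hper1 : ∀ r, u (r + K + 1) = u (r + 1) := fun r => by rw [add_right_comm]; exact hper _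
  have hdec : IsPeriodicSimpleDecomp (concatWalks len w) (cut len) K := by
    refine isPeriodicSimpleDecomp_concatWalks (len := len) (w := w) hpos hlink (fun r => ?_)
      (fun r => ?_) hpreInj ?_
    · simp only [len, hshift, hper r, hper1]
    · simp only [w, hshift, hper r, hper1]
    · rcases Nat.lt_or_ge 1 K with hK1 | hK1
      · exact Or.inr ⟨hK1, fun r => hlegPath r (hne hK1 r).symm⟩
      · obtain rfl : K = 1 := by omega
        exact Or.inl ⟨rfl, fun r => hlegCycle r (hper r).symm⟩
  refine ⟨concatWalks len w, cut len, ?_, ?_, ?_, fun m hm => ?_, fun r j => ?_, hdec⟩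
  · simpa [w, hpre0] using
      concatWalks_cut_add_of_le (len := len) hpos hlink (r := 0) (Nat.zero_le _)
  · refine isPlay_concatWalks (len := len) hpos hlink ?_
    rintro (_ | r)
    · exact hpre
    · exact hlegWalk r
  · rintro _ ⟨m, rfl⟩
    obtain ⟨_ | r, s, hs, -, hm⟩ := exists_concatWalks_eq (len := len) (w := w) hpos m <;> rw [hm]
    · obtain ⟨k, -, hk⟩ := hpreImg ⟨s, le_of_lt hs, rfl⟩
      exact ⟨k, hk⟩
    · obtain ⟨k, -, hk⟩ := hlegImg r ⟨s, le_of_lt hs, rfl⟩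
      exact ⟨k, hk⟩
  · obtain ⟨_ | r, s, hs, rfl, hval⟩ := exists_concatWalks_eq (len := len) (w := w) hpos m
    · have := cut_succ (len := len) 0
      simp only [cut_zero, zero_add] at this hm
      omega
    · rw [hval]
      exact hlegImg r ⟨s, le_of_lt hs, rfl⟩
  · refine ⟨cut len (r + j * K + 1), ?_, ?_⟩
    · have := le_cut_succ (len := len) hpos (r + j * K)
      have : j ≤ j * K := Nat.le_mul_of_pos_right j hK
      omega
    · rw [← add_zero (cut len _), concatWalks_cut_add (len := len) (hpos _)]
      exact (hlegStart _).trans (by simpa using hper.nat_mul j r)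

theorem exists_periodic_lasso {A : Arena V n} {π' : ℕ → V} (hπ' : A.IsPlay π')
    (T : Fin n → Set V) (hinf : ∃ v, ∀ j, ∃ k, j ≤ k ∧ π' k = v)
    (hsat : (satBuchi T π').Nonempty) :
    ∃ (π : ℕ → V) (p : ℕ → ℕ) (K : ℕ), π 0 = π' 0 ∧ A.IsPlay π ∧ range π ⊆ range π' ∧
      satBuchi T π = satBuchi T π' ∧ (∀ i ∉ satBuchi T π', ∀ m, p 1 ≤ m → π m ∉ T i) ∧
      0 < K ∧ K ≤ (satBuchi T π').ncard ∧ IsPeriodicSimpleDecomp π p K := by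
  obtain ⟨a, b, hab, hloop, hwin, hlose⟩ := exists_loop_visiting_targets hinf T
  choose! q hq hqT using hwin
  have hXne : ((fun i => π' (q i)) '' satBuchi T π').Nonempty := hsat.image _
  obtain ⟨u, hurange, huper, hune⟩ := ((toFinite _).image _).exists_periodic_enum hXne
  have hu : ∀ r, u r ∈ π' '' Ico a b := fun r => by
    obtain ⟨i, hi, hir⟩ := hurange.subset (mem_range_self r)
    exact ⟨q i, hq i hi, hir⟩
  have hK := (ncard_pos (toFinite _)).2 hXne
  obtain ⟨π, p, hπ0, hπ, hrange, hloopPart, hrec, hdec⟩ :=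
    exists_lasso_of_loop hπ' hab hloop hK hu huper hune
  have havoid : ∀ i ∉ satBuchi T π', ∀ m, p 1 ≤ m → π m ∉ T i := fun i hi m hm => by
    obtain ⟨k, hk, hπk⟩ := hloopPart m hm
    exact hπk ▸ hlose i hi k hk.1
  refine ⟨π, p, _, hπ0, hπ, hrange, ?_, havoid, hK, ncard_image_le (toFinite _), hdec⟩
  ext i
  refine ⟨fun hi => by_contra fun hiS => ?_, fun hi j => ?_⟩
  · obtain ⟨k, hk, hkT⟩ := hi (p 1)
    exact havoid i hiS k hk hkT
  · obtain ⟨r, hr⟩ := hurange.symm.subset (mem_image_of_mem _ hi)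
    obtain ⟨m, hm, hπm⟩ := hrec r j
    exact ⟨m, hm, hπm ▸ hr ▸ hqT i hi⟩

end Arena

/-- The decomposition `(sg_0, sg_1, sg_2, …)` of `π` is encoded by its cut positions `p`, with
`sg_l = π[p l .. p (l+1)]`. -/
theorem buchi_decomposition_infinitely_occurring
    (V : Type) (n : ℕ) (A : Arena V n) (T : Fin n → Set V) (v0 : V)
    (σ' : Fin n → A.Strategy)
    (hNE : A.IsNEObj (fun i => BuchiObj (T i)) σ' v0)
    (π' : ℕ → V) (hπ' : outcome A σ' v0 = π')
    (hinf : ∃ v, ∀ j, ∃ k, j ≤ k ∧ π' k = v)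
    (hsat : (satBuchi T π').Nonempty) :
    ∃ (σ : Fin n → A.Strategy) (π : ℕ → V) (p : ℕ → ℕ) (K : ℕ),
      A.IsNEObj (fun i => BuchiObj (T i)) σ v0 ∧
      outcome A σ v0 = π ∧
      satBuchi T π = satBuchi T π' ∧
      -- cut positions of the decomposition
      p 0 = 0 ∧ (∀ l, p l ≤ p (l + 1)) ∧ (∀ l, 1 ≤ l → p l < p (l + 1)) ∧
      -- the decomposition is simple (a segment may be a simple cycle)
      (∀ l, SimpleSeg π (p l) (p (l + 1)) ∨ SimpleCycleSeg π (p l) (p (l + 1))) ∧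
      -- (i): targets of losing players do not occur in `sg_l`, l ≥ 1
      (∀ l, 1 ≤ l → ∀ i, i ∉ satBuchi T π →
        ∀ m, p l ≤ m → m ≤ p (l + 1) → π m ∉ T i) ∧
      -- (ii): periodicity with period `K ≤ |Sat(π')|`
      1 ≤ K ∧ K ≤ (satBuchi T π').ncard ∧
      (∀ l, 1 ≤ l → SegEq π p l (l + K)) ∧
      -- (iii)
      ((K = 1 ∧ SimpleCycleSeg π (p 1) (p 2)) ∨
        (1 < K ∧ ∀ l, 1 ≤ l → l ≤ K →
          p l < p (l + 1) ∧ SimpleSeg π (p l) (p (l + 1)))) := by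
  subst hπ'
  obtain ⟨π, p, K, hπ0, hπ, hrange, hsatπ, havoid, hK, hKle, hp0, hmono, hstrict, hsimple,
    hsegeq, hiii⟩ := exists_periodic_lasso (isPlay_outcome σ' v0) T hinf hsat
  obtain ⟨σ, hout, hNEσ⟩ := hNE.exists_outcome_eq_of_range_subset
    (fun i => prefixIndependent_buchiObj _) hπ0 hπ hrange
    fun i hi => show i ∈ satBuchi T π from hsatπ ▸ hi
  refine ⟨σ, π, p, K, hNEσ, hout, hsatπ, hp0, hmono, hstrict, hsimple, ?_, hK, hKle, hsegeq,
    hiii⟩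
  intro l hl i hi m hm _
  exact havoid i (hsatπ ▸ hi) m ((monotone_nat_of_le_succ hmono hl).trans hm)
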